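/- arXiv:2004.07895 — 8 statements merged into one kernel-verified Lean document; each statement's English description precedes it below -/
import Mathlib

section
/- Let μ : [0,∞) → ℝ be continuous on [0,∞) and continuously differentiable on (0,∞) with μ(ρ) > 0 and μ'(ρ) > 0 for every ρ > 0, satisfying the vacuum condition with exponent α ∈ (2/3, 4] and either the large-density condition with exponent β ∈ (1,4) or μ(ρ) = ρ for all ρ ≥ M₀ for some M₀ > 0. Let a > 0 and γ ≥ 1, and assume that either α < 1, or γ < α, or there exist c₀ > 0 and ρ* > 0 with μ(ρ) ≥ c₀ρ for all ρ ∈ (0, ρ*). Then there exists a constant C > 0 such that for every ρ > 0: μ(ρ)/ρ + a γ ρ^{γ−1}/μ'(ρ) ≥ C. -/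
/-!
Since `(μ ρ / ρ ^ c)' = (ρ μ' - c μ) ρ ^ (c - 1) / ρ ^ (2 c)`, the quotient `μ / ρ ^ c` is monotone
where `ρ μ' / μ ≥ c` and antitone where `ρ μ' / μ ≤ c`; so a limit `ρ μ' / μ → κ` squeezes `μ`
between multiples of `ρ ^ c` for `c` on either side of `κ`. Near vacuum with `α < 1`, or at infinity
with `β > 1`, this gives `μ ρ ≥ c₀ ρ`, bounding `μ ρ / ρ` from below. If instead `γ < α`, then
`μ' ≲ μ / ρ ≲ ρ ^ (c - 1)` for some `c ∈ (γ, α)`, which bounds `ρ ^ (γ - 1) / μ'` from below near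
vacuum. In between, the positive continuous quantity attains a positive minimum on a compact interval.
-/

open Filter Set Topology

namespace ViscosityBound

variable {μ : ℝ → ℝ} {c : ℝ}

theorem hasDerivAt_div_rpow {x : ℝ} (hx : 0 < x) (hd : DifferentiableAt ℝ μ x) :
    HasDerivAt (fun y => μ y / y ^ c)
      ((x * deriv μ x - c * μ x) * x ^ (c - 1) / (x ^ c) ^ 2) x := by
  refine (hd.hasDerivAt.div (Real.hasDerivAt_rpow_const (p := c) (Or.inl hx.ne'))
    (Real.rpow_pos_of_pos hx c).ne').congr_deriv ?_
  rw [show x ^ c = x * x ^ (c - 1) by rw [Real.rpow_sub_one hx.ne']; field_simp]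
  ring

theorem monotoneOn_div_rpow {I : Set ℝ} (hI : Convex ℝ I) (hI0 : I ⊆ Ioi 0)
    (hd : ∀ x ∈ I, DifferentiableAt ℝ μ x) (h : ∀ x ∈ I, c * μ x ≤ x * deriv μ x) :
    MonotoneOn (fun x => μ x / x ^ c) I := by
  have hder x (hx : x ∈ I) := hasDerivAt_div_rpow (c := c) (hI0 hx) (hd x hx)
  refine monotoneOn_of_hasDerivWithinAt_nonneg hI
    (fun x hx => (hder x hx).continuousAt.continuousWithinAt)
    (fun x hx => (hder x (interior_subset hx)).hasDerivWithinAt) fun x hx => ?_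
  have hx0 : 0 < x := hI0 (interior_subset hx)
  have := h x (interior_subset hx)
  exact div_nonneg (mul_nonneg (by linarith) (by positivity)) (by positivity)

theorem antitoneOn_div_rpow {I : Set ℝ} (hI : Convex ℝ I) (hI0 : I ⊆ Ioi 0)
    (hd : ∀ x ∈ I, DifferentiableAt ℝ μ x) (h : ∀ x ∈ I, x * deriv μ x ≤ c * μ x) :
    AntitoneOn (fun x => μ x / x ^ c) I := by
  have hder x (hx : x ∈ I) := hasDerivAt_div_rpow (c := c) (hI0 hx) (hd x hx)
  refine antitoneOn_of_hasDerivWithinAt_nonpos hI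
    (fun x hx => (hder x hx).continuousAt.continuousWithinAt)
    (fun x hx => (hder x (interior_subset hx)).hasDerivWithinAt) fun x hx => ?_
  have hx0 : 0 < x := hI0 (interior_subset hx)
  have := h x (interior_subset hx)
  exact div_nonpos_of_nonpos_of_nonneg (mul_nonpos_of_nonpos_of_nonneg (by linarith)
    (by positivity)) (by positivity)

section Limits

variable {l : Filter ℝ} {κ : ℝ}

theorem eventually_mul_le_mul_deriv (hpos : ∀ᶠ x in l, 0 < μ x)
    (h : Tendsto (fun x => x * deriv μ x / μ x) l (𝓝 κ)) (hc : c < κ) :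
    ∀ᶠ x in l, c * μ x ≤ x * deriv μ x := by
  filter_upwards [h.eventually_const_lt hc, hpos] with x hx hμ
  exact ((lt_div_iff₀ hμ).1 hx).le

theorem eventually_mul_deriv_le_mul (hpos : ∀ᶠ x in l, 0 < μ x)
    (h : Tendsto (fun x => x * deriv μ x / μ x) l (𝓝 κ)) (hc : κ < c) :
    ∀ᶠ x in l, x * deriv μ x ≤ c * μ x := by
  filter_upwards [h.eventually_lt_const hc, hpos] with x hx hμ
  exact ((div_lt_iff₀ hμ).1 hx).le

end Limits

section Asymptotics

variable {κ : ℝ}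

theorem exists_pos_mul_rpow_le_nhdsGT (hd : ∀ x > 0, DifferentiableAt ℝ μ x)
    (hpos : ∀ x > 0, 0 < μ x) (h : Tendsto (fun x => x * deriv μ x / μ x) (𝓝[>] 0) (𝓝 κ))
    (hc : κ < c) : ∃ K > 0, ∀ᶠ x in 𝓝[>] 0, K * x ^ c ≤ μ x := by
  obtain ⟨u, hu, hsub⟩ := mem_nhdsGT_iff_exists_Ioo_subset.1
    (eventually_mul_deriv_le_mul (eventually_nhdsWithin_of_forall hpos) h hc)
  have hu0 : 0 < u / 2 := half_pos hu
  have hanti := antitoneOn_div_rpow (convex_Ioo 0 u) Ioo_subset_Ioi_self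
    (fun x hx => hd x hx.1) hsub
  refine ⟨μ (u / 2) / (u / 2) ^ c, div_pos (hpos _ hu0) (Real.rpow_pos_of_pos hu0 c), ?_⟩
  filter_upwards [Ioo_mem_nhdsGT hu0] with x hx
  have hxu : x ∈ Ioo 0 u := ⟨hx.1, hx.2.trans (half_lt_self hu)⟩
  exact (le_div_iff₀ (Real.rpow_pos_of_pos hx.1 c)).1
    (hanti hxu ⟨hu0, half_lt_self hu⟩ hx.2.le)

theorem exists_pos_le_mul_rpow_nhdsGT (hd : ∀ x > 0, DifferentiableAt ℝ μ x)
    (hpos : ∀ x > 0, 0 < μ x) (h : Tendsto (fun x => x * deriv μ x / μ x) (𝓝[>] 0) (𝓝 κ))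
    (hc : c < κ) : ∃ K > 0, ∀ᶠ x in 𝓝[>] 0, μ x ≤ K * x ^ c := by
  obtain ⟨u, hu, hsub⟩ := mem_nhdsGT_iff_exists_Ioo_subset.1
    (eventually_mul_le_mul_deriv (eventually_nhdsWithin_of_forall hpos) h hc)
  have hu0 : 0 < u / 2 := half_pos hu
  have hmono := monotoneOn_div_rpow (convex_Ioo 0 u) Ioo_subset_Ioi_self
    (fun x hx => hd x hx.1) hsub
  refine ⟨μ (u / 2) / (u / 2) ^ c, div_pos (hpos _ hu0) (Real.rpow_pos_of_pos hu0 c), ?_⟩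
  filter_upwards [Ioo_mem_nhdsGT hu0] with x hx
  have hxu : x ∈ Ioo 0 u := ⟨hx.1, hx.2.trans (half_lt_self hu)⟩
  exact (div_le_iff₀ (Real.rpow_pos_of_pos hx.1 c)).1
    (hmono hxu ⟨hu0, half_lt_self hu⟩ hx.2.le)

theorem exists_pos_mul_rpow_le_atTop (hd : ∀ x > 0, DifferentiableAt ℝ μ x)
    (hpos : ∀ x > 0, 0 < μ x) (h : Tendsto (fun x => x * deriv μ x / μ x) atTop (𝓝 κ))
    (hc : c < κ) : ∃ K > 0, ∀ᶠ x in atTop, K * x ^ c ≤ μ x := by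
  obtain ⟨M, hM⟩ := eventually_atTop.1 ((eventually_mul_le_mul_deriv
    ((eventually_gt_atTop 0).mono hpos) h hc).and (eventually_gt_atTop 0))
  have hM0 : 0 < M := (hM M le_rfl).2
  have hmono := monotoneOn_div_rpow (convex_Ici M) (fun x hx => (hM x hx).2)
    (fun x hx => hd x (hM x hx).2) fun x hx => (hM x hx).1
  refine ⟨μ M / M ^ c, div_pos (hpos M hM0) (Real.rpow_pos_of_pos hM0 c), ?_⟩
  filter_upwards [eventually_ge_atTop M] with x hx
  exact (le_div_iff₀ (Real.rpow_pos_of_pos (hM x hx).2 c)).1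
    (hmono self_mem_Ici hx hx)

theorem exists_pos_le_div_self_nhdsGT (hd : ∀ x > 0, DifferentiableAt ℝ μ x)
    (hpos : ∀ x > 0, 0 < μ x) (h : Tendsto (fun x => x * deriv μ x / μ x) (𝓝[>] 0) (𝓝 κ))
    (hκ : κ < 1) : ∃ c₀ > 0, ∀ᶠ x in 𝓝[>] 0, c₀ ≤ μ x / x := by
  obtain ⟨c, hκc, hc⟩ := exists_between hκ
  obtain ⟨K, hK, hKμ⟩ := exists_pos_mul_rpow_le_nhdsGT hd hpos h hκc
  refine ⟨K, hK, ?_⟩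
  filter_upwards [hKμ, Ioo_mem_nhdsGT one_pos] with x hxμ hx
  have hxc : x ≤ x ^ c := by
    simpa using Real.rpow_le_rpow_of_exponent_ge hx.1 hx.2.le hc.le
  rw [le_div_iff₀ hx.1]
  exact (mul_le_mul_of_nonneg_left hxc hK.le).trans hxμ

theorem exists_pos_le_div_self_atTop (hd : ∀ x > 0, DifferentiableAt ℝ μ x)
    (hpos : ∀ x > 0, 0 < μ x) (h : Tendsto (fun x => x * deriv μ x / μ x) atTop (𝓝 κ))
    (hκ : 1 < κ) : ∃ c₀ > 0, ∀ᶠ x in atTop, c₀ ≤ μ x / x := by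
  obtain ⟨c, hc, hcκ⟩ := exists_between hκ
  obtain ⟨K, hK, hKμ⟩ := exists_pos_mul_rpow_le_atTop hd hpos h hcκ
  refine ⟨K, hK, ?_⟩
  filter_upwards [hKμ, eventually_ge_atTop 1] with x hxμ hx
  have hxc : x ≤ x ^ c := by
    simpa using Real.rpow_le_rpow_of_exponent_le hx hc.le
  rw [le_div_iff₀ (by linarith)]
  exact (mul_le_mul_of_nonneg_left hxc hK.le).trans hxμ

theorem exists_pos_le_rpow_div_deriv_nhdsGT (hd : ∀ x > 0, DifferentiableAt ℝ μ x)
    (hpos : ∀ x > 0, 0 < μ x) (hpos' : ∀ x > 0, 0 < deriv μ x)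
    (h : Tendsto (fun x => x * deriv μ x / μ x) (𝓝[>] 0) (𝓝 κ)) {b γ : ℝ} (hb : 0 < b)
    (hγ : γ < κ) : ∃ C > 0, ∀ᶠ x in 𝓝[>] 0, C ≤ b * x ^ (γ - 1) / deriv μ x := by
  obtain ⟨c, hγc, hcκ⟩ := exists_between hγ
  obtain ⟨K, hK, hμK⟩ := exists_pos_le_mul_rpow_nhdsGT hd hpos h hcκ
  obtain ⟨L, hκL, hL⟩ : ∃ L, κ < L ∧ 0 < L :=
    ⟨|κ| + 1, by linarith [le_abs_self κ], by positivity⟩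
  have hμ' := eventually_mul_deriv_le_mul (eventually_nhdsWithin_of_forall hpos) h hκL
  refine ⟨b / (L * K), by positivity, ?_⟩
  filter_upwards [hμK, hμ', Ioo_mem_nhdsGT one_pos] with x hxμ hxμ' hx
  have hpow : x ^ c ≤ x ^ γ := Real.rpow_le_rpow_of_exponent_ge hx.1 hx.2.le hγc.le
  have hsplit : x ^ γ = x * x ^ (γ - 1) := by
    rw [Real.rpow_sub_one hx.1.ne', mul_div_cancel₀ _ hx.1.ne']
  rw [div_le_div_iff₀ (by positivity) (hpos' x hx.1)]
  refine le_of_mul_le_mul_left ?_ hx.1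
  calc x * (b * deriv μ x) = b * (x * deriv μ x) := by ring
    _ ≤ b * (L * (K * x ^ c)) :=
        mul_le_mul_of_nonneg_left (hxμ'.trans (mul_le_mul_of_nonneg_left hxμ hL.le)) hb.le
    _ ≤ b * (L * (K * x ^ γ)) := by gcongr
    _ = x * (b * x ^ (γ - 1) * (L * K)) := by rw [hsplit]; ring

end Asymptotics

theorem exists_pos_forall_le_of_continuousOn_Ioi {f : ℝ → ℝ} (hf : ContinuousOn f (Ioi 0))
    (hpos : ∀ x > 0, 0 < f x) (h0 : ∃ C > 0, ∀ᶠ x in 𝓝[>] 0, C ≤ f x)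
    (htop : ∃ C > 0, ∀ᶠ x in atTop, C ≤ f x) : ∃ C > 0, ∀ x > 0, C ≤ f x := by
  obtain ⟨C₀, hC₀, h₀⟩ := h0
  obtain ⟨C₁, hC₁, h₁⟩ := htop
  obtain ⟨δ, hδ, hδf⟩ := mem_nhdsGT_iff_exists_Ioo_subset.1 h₀
  obtain ⟨M, hM⟩ := eventually_atTop.1 h₁
  have hδ0 : 0 < δ := hδ
  obtain ⟨x₀, hx₀, hmin⟩ := isCompact_Icc.exists_isMinOn
    (nonempty_Icc.2 (le_max_right M δ))
    (hf.mono fun x hx => hδ0.trans_le hx.1)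
  refine ⟨min C₀ (min C₁ (f x₀)), lt_min hC₀ (lt_min hC₁ (hpos x₀ (hδ0.trans_le hx₀.1))),
    fun x hx => ?_⟩
  rcases lt_or_ge x δ with hxδ | hδx
  · exact (min_le_left _ _).trans (hδf ⟨hx, hxδ⟩)
  rcases le_or_gt M x with hMx | hxM
  · exact (min_le_right _ _).trans <| (min_le_left _ _).trans (hM x hMx)
  · exact (min_le_right _ _).trans <| (min_le_right _ _).trans
      (hmin ⟨hδx, hxM.le.trans (le_max_left M δ)⟩)

theorem continuousOn_div_self_add_rpow_div_deriv (hC1 : ContDiffOn ℝ 1 μ (Ioi 0))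
    (hpos' : ∀ x > 0, 0 < deriv μ x) (b γ : ℝ) :
    ContinuousOn (fun x => μ x / x + b * x ^ (γ - 1) / deriv μ x) (Ioi 0) :=
  (hC1.continuousOn.div continuousOn_id fun _ hx => ne_of_gt hx).add
    ((continuousOn_const.mul (continuousOn_id.rpow_const fun _ hx => Or.inl (ne_of_gt hx))).div
      (hC1.continuousOn_deriv_of_isOpen isOpen_Ioi le_rfl) fun x hx => (hpos' x hx).ne')

section Sums

variable {α : Type*} {l : Filter α} {f g : α → ℝ}

theorem exists_pos_le_add_of_left (hg : ∀ᶠ x in l, 0 ≤ g x)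
    (hf : ∃ C > 0, ∀ᶠ x in l, C ≤ f x) : ∃ C > 0, ∀ᶠ x in l, C ≤ f x + g x :=
  let ⟨C, hC, h⟩ := hf
  ⟨C, hC, by filter_upwards [h, hg] with x h hg; linarith⟩

theorem exists_pos_le_add_of_right (hf : ∀ᶠ x in l, 0 ≤ f x)
    (hg : ∃ C > 0, ∀ᶠ x in l, C ≤ g x) : ∃ C > 0, ∀ᶠ x in l, C ≤ f x + g x :=
  let ⟨C, hC, h⟩ := hg
  ⟨C, hC, by filter_upwards [h, hf] with x h hf; linarith⟩

end Sums

end ViscosityBound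

open ViscosityBound in
theorem stmt3_general (μ : ℝ → ℝ)
    (hC1 : ContDiffOn ℝ 1 μ (Set.Ioi 0))
    (hpos : ∀ ρ > (0:ℝ), 0 < μ ρ) (hpos' : ∀ ρ > (0:ℝ), 0 < deriv μ ρ)
    (α : ℝ)
    (hvac : Tendsto (fun ρ => ρ * deriv μ ρ / μ ρ) (nhdsWithin 0 (Set.Ioi 0)) (nhds α))
    (hlarge : (∃ β : ℝ, 1 < β ∧ β < 4 ∧
        Tendsto (fun ρ => ρ * deriv μ ρ / μ ρ) atTop (nhds β)) ∨
      (∃ M₀ > (0:ℝ), ∀ ρ ≥ M₀, μ ρ = ρ))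
    (a γ : ℝ) (ha : 0 < a) (hγ : 1 ≤ γ)
    (hcase : α < 1 ∨ γ < α ∨
      ∃ c₀ > (0:ℝ), ∃ ρs > (0:ℝ), ∀ ρ ∈ Set.Ioo (0:ℝ) ρs, c₀ * ρ ≤ μ ρ) :
    ∃ C > (0:ℝ), ∀ ρ > (0:ℝ), μ ρ / ρ + a * γ * ρ ^ (γ - 1) / deriv μ ρ ≥ C := by
  have hd : ∀ ρ > 0, DifferentiableAt ℝ μ ρ := fun ρ hρ =>
    (hC1.differentiableOn one_ne_zero ρ hρ).differentiableAt (Ioi_mem_nhds hρ)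
  have hb : 0 < a * γ := mul_pos ha (by linarith)
  have hfirst : ∀ ρ > 0, 0 < μ ρ / ρ := fun ρ hρ => div_pos (hpos ρ hρ) hρ
  have hsecond : ∀ ρ > 0, 0 ≤ a * γ * ρ ^ (γ - 1) / deriv μ ρ := fun ρ hρ =>
    div_nonneg (mul_nonneg hb.le (Real.rpow_nonneg hρ.le _)) (hpos' ρ hρ).le
  refine exists_pos_forall_le_of_continuousOn_Ioi
    (continuousOn_div_self_add_rpow_div_deriv hC1 hpos' _ _)
    (fun ρ hρ => add_pos_of_pos_of_nonneg (hfirst ρ hρ) (hsecond ρ hρ)) ?_ ?_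
  · have hsecond₀ := eventually_nhdsWithin_of_forall (s := Ioi 0) (a := 0) hsecond
    rcases hcase with hα | hγα | ⟨c₀, hc₀, ρs, hρs, hlin⟩
    · exact exists_pos_le_add_of_left hsecond₀ (exists_pos_le_div_self_nhdsGT hd hpos hvac hα)
    · exact exists_pos_le_add_of_right
        (eventually_nhdsWithin_of_forall fun ρ hρ => (hfirst ρ hρ).le)
        (exists_pos_le_rpow_div_deriv_nhdsGT hd hpos hpos' hvac hb hγα)
    · refine exists_pos_le_add_of_left hsecond₀ ⟨c₀, hc₀, ?_⟩
      filter_upwards [Ioo_mem_nhdsGT hρs] with ρ hρ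
      exact (le_div_iff₀ hρ.1).2 (hlin ρ hρ)
  · have hsecondTop := (eventually_gt_atTop 0).mono hsecond
    rcases hlarge with ⟨β, hβ, -, hβlim⟩ | ⟨M₀, -, hM₀⟩
    · exact exists_pos_le_add_of_left hsecondTop (exists_pos_le_div_self_atTop hd hpos hβlim hβ)
    · refine exists_pos_le_add_of_left hsecondTop ⟨1, one_pos, ?_⟩
      filter_upwards [eventually_ge_atTop M₀, eventually_gt_atTop 0] with ρ hρ hρ0
      rw [hM₀ ρ hρ, div_self hρ0.ne']

/-- Under the structural hypotheses on the shear viscosity `μ` (vacuum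
condition with exponent `α ∈ (2/3,4]`, large-density condition with exponent `β ∈ (1,4)` or
`μ(ρ) = ρ` for large `ρ`) and the compatibility condition between the pressure exponent
`γ ≥ 1` and `α` (either `α < 1`, or `γ < α`, or `μ(ρ) ≥ c₀ρ` near vacuum), the quantity
`μ(ρ)/ρ + aγρ^{γ−1}/μ'(ρ) = μ(ρ)/ρ + ρH''(ρ)/μ'(ρ)` is bounded below by a positive
constant, uniformly in `ρ > 0`. -/
theorem stmt3 (μ : ℝ → ℝ)
    (hcont : ContinuousOn μ (Set.Ici 0))
    (hC1 : ContDiffOn ℝ 1 μ (Set.Ioi 0))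
    (hpos : ∀ ρ > (0:ℝ), 0 < μ ρ) (hpos' : ∀ ρ > (0:ℝ), 0 < deriv μ ρ)
    (α : ℝ) (hα1 : 2 / 3 < α) (hα2 : α ≤ 4)
    (hvac : Tendsto (fun ρ => ρ * deriv μ ρ / μ ρ) (nhdsWithin 0 (Set.Ioi 0)) (nhds α))
    (hlarge : (∃ β : ℝ, 1 < β ∧ β < 4 ∧
        Tendsto (fun ρ => ρ * deriv μ ρ / μ ρ) atTop (nhds β)) ∨
      (∃ M₀ > (0:ℝ), ∀ ρ ≥ M₀, μ ρ = ρ))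
    (a γ : ℝ) (ha : 0 < a) (hγ : 1 ≤ γ)
    (hcase : α < 1 ∨ γ < α ∨
      ∃ c₀ > (0:ℝ), ∃ ρs > (0:ℝ), ∀ ρ ∈ Set.Ioo (0:ℝ) ρs, c₀ * ρ ≤ μ ρ) :
    ∃ C > (0:ℝ), ∀ ρ > (0:ℝ), μ ρ / ρ + a * γ * ρ ^ (γ - 1) / deriv μ ρ ≥ C :=
  stmt3_general μ hC1 hpos hpos' α hvac hlarge a γ ha hγ hcase
end

section
/- Let 0 < ρ₀ < r < M, let C₀ > 0, let F : ℝ → ℝ satisfy F(ρ) ≥ max(ρ, 1) for all ρ > M, and let G : [0,∞) → ℝ be twice continuously differentiable on an open interval containing [ρ₀, M], with G(ρ) ≤ C₀ for all ρ ∈ [0, ρ₀) and G(ρ) ≤ C₀ F(ρ) for all ρ > M. Then there exists a constant C₁ > 0 such that for every ρ ≥ 0: G(ρ) − G(r) − G'(r)(ρ − r) ≤ C₁ ( |ρ − r|² 𝟙_{ρ₀ ≤ ρ ≤ M}(ρ) + 𝟙_{ρ < ρ₀}(ρ) + F(ρ) 𝟙_{ρ > M}(ρ) ). -/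
/-!
On `[ρ₀, M]` the relative quantity `G(ρ|r)` is a first-order Taylor remainder at `r`; since `G'`
is `C¹`, hence Lipschitz on this compact interval, the remainder is `O(|ρ - r|²)`. Off this
interval only the affine part `G(r) + G'(r)(ρ - r)` needs control: it is bounded for `0 ≤ ρ < ρ₀`,
and by a multiple of `ρ ≤ F(ρ)` for `ρ > M`, so the assumed bounds on `G` finish the proof.
-/

open Set NNReal

theorem abs_sub_sub_mul_le_of_lipschitzOnWith {f f' : ℝ → ℝ} {s : Set ℝ} (hs : s.OrdConnected)
    {K : ℝ≥0} (hf : ∀ x ∈ s, HasDerivWithinAt f (f' x) s x) (hf' : LipschitzOnWith K f' s)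
    {x y : ℝ} (hx : x ∈ s) (hy : y ∈ s) :
    |f y - f x - f' x * (y - x)| ≤ K * (y - x) ^ 2 := by
  have hxy : uIcc x y ⊆ s := hs.uIcc_subset hx hy
  have hderiv : ∀ z ∈ uIcc x y,
      HasDerivWithinAt (fun z => f z - f' x * z) (f' z - f' x) (uIcc x y) z := fun z hz =>
    ((hf z (hxy hz)).mono hxy).sub (by simpa using (hasDerivWithinAt_id z _).const_mul (f' x))
  have hbound : ∀ z ∈ uIcc x y, ‖f' z - f' x‖ ≤ K * |y - x| := fun z hz =>
    calc ‖f' z - f' x‖ ≤ K * |z - x| := hf'.norm_sub_le (hxy hz) hx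
      _ ≤ K * |y - x| := mul_le_mul_of_nonneg_left (abs_sub_left_of_mem_uIcc hz) K.2
  have hmean := (convex_uIcc x y).norm_image_sub_le_of_norm_hasDerivWithin_le hderiv hbound
    left_mem_uIcc right_mem_uIcc
  rw [← sq_abs (y - x)]
  calc |f y - f x - f' x * (y - x)| = ‖(f y - f' x * y) - (f x - f' x * x)‖ := by
        rw [Real.norm_eq_abs]; ring_nf
    _ ≤ K * |y - x| * ‖y - x‖ := hmean
    _ = K * |y - x| ^ 2 := by rw [Real.norm_eq_abs]; ring

theorem ContDiffOn.exists_abs_sub_sub_deriv_mul_le {G : ℝ → ℝ} {U : Set ℝ} {a b r : ℝ}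
    (hG : ContDiffOn ℝ 2 G U) (hU : IsOpen U) (hab : Icc a b ⊆ U) (hr : r ∈ Icc a b) :
    ∃ K : ℝ≥0, ∀ ρ ∈ Icc a b, |G ρ - G r - deriv G r * (ρ - r)| ≤ K * (ρ - r) ^ 2 := by
  have hG' : ContDiffOn ℝ 1 (deriv G) U := hG.deriv_of_isOpen hU (by norm_num)
  obtain ⟨K, hK⟩ := (hG'.mono hab).exists_lipschitzOnWith one_ne_zero (convex_Icc a b)
    isCompact_Icc
  have hderiv : ∀ x ∈ Icc a b, HasDerivWithinAt G (deriv G x) (Icc a b) x := fun x hx =>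
    ((hG.differentiableOn (by norm_num) x (hab hx)).differentiableAt
      (hU.mem_nhds (hab hx))).hasDerivAt.hasDerivWithinAt
  exact ⟨K, fun ρ hρ => abs_sub_sub_mul_le_of_lipschitzOnWith ordConnected_Icc hderiv hK hr hρ⟩

theorem sub_sub_mul_le_add_abs (x a d h : ℝ) : x - a - d * h ≤ x + |a| + |d| * |h| := by
  have := neg_abs_le (d * h)
  rw [abs_mul] at this
  linarith [neg_abs_le a]

/-- If `G` is `C²` on an open interval containing `[ρ₀, M]`, bounded by `C₀`
on `[0, ρ₀)` and by `C₀ F(ρ)` for `ρ > M` (where `F(ρ) ≥ max(ρ,1)` for `ρ > M`), then the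
relative quantity `G(ρ|r) = G(ρ) − G(r) − G'(r)(ρ − r)` is controlled, for `ρ ≥ 0`, by
`C₁ (|ρ−r|² 𝟙_{ρ₀≤ρ≤M} + 𝟙_{ρ<ρ₀} + F(ρ) 𝟙_{ρ>M})`. -/
theorem stmt4 (ρ₀ r M C₀ : ℝ) (h0 : 0 < ρ₀) (h1 : ρ₀ < r) (h2 : r < M) (hC₀ : 0 < C₀)
    (F G : ℝ → ℝ)
    (hF : ∀ ρ > M, max ρ 1 ≤ F ρ)
    (hG : ∃ s t : ℝ, s < ρ₀ ∧ M < t ∧ ContDiffOn ℝ 2 G (Set.Ioo s t))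
    (hGsmall : ∀ ρ, 0 ≤ ρ → ρ < ρ₀ → G ρ ≤ C₀)
    (hGbig : ∀ ρ > M, G ρ ≤ C₀ * F ρ) :
    ∃ C₁ > (0:ℝ), ∀ ρ ≥ (0:ℝ),
      G ρ - G r - deriv G r * (ρ - r) ≤
        C₁ * ((if ρ₀ ≤ ρ ∧ ρ ≤ M then |ρ - r| ^ 2 else 0) +
              (if ρ < ρ₀ then 1 else 0) +
              (if M < ρ then F ρ else 0)) := by
  obtain ⟨s, t, hs, ht, hC2⟩ := hG
  obtain ⟨K, hK⟩ := hC2.exists_abs_sub_sub_deriv_mul_le isOpen_Ioo (Icc_subset_Ioo hs ht)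
    ⟨h1.le, h2.le⟩
  have hr : 0 ≤ r := by linarith
  have hA := abs_nonneg (G r)
  have hB := abs_nonneg (deriv G r)
  refine ⟨K + C₀ + |G r| + |deriv G r| * (1 + r), by positivity, fun ρ hρ => ?_⟩
  have hlin := sub_sub_mul_le_add_abs (G ρ) (G r) (deriv G r) (ρ - r)
  rcases lt_or_ge ρ ρ₀ with hρ₀ | hρ₀
  · rw [if_neg (by intro h; linarith [h.1]), if_pos hρ₀, if_neg (by linarith), add_zero,
      zero_add, mul_one]
    have : |ρ - r| ≤ r := by rw [abs_of_nonpos (by linarith)]; linarith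
    nlinarith [hGsmall ρ hρ hρ₀, mul_le_mul_of_nonneg_left this hB, K.2]
  rcases le_or_gt ρ M with hM | hM
  · rw [if_pos ⟨hρ₀, hM⟩, if_neg (not_lt.2 hρ₀), if_neg (not_lt.2 hM), add_zero, add_zero,
      sq_abs]
    have := (le_abs_self _).trans (hK ρ ⟨hρ₀, hM⟩)
    nlinarith [sq_nonneg (ρ - r), mul_nonneg hB hr]
  · rw [if_neg (by intro h; linarith [h.2]), if_neg (by linarith), if_pos hM, zero_add, zero_add]
    have hF1 : 1 ≤ F ρ := (le_max_right ρ 1).trans (hF ρ hM)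
    have hFρ : |ρ - r| ≤ F ρ := by
      rw [abs_of_nonneg (by linarith)]; linarith [(le_max_left ρ 1).trans (hF ρ hM)]
    nlinarith [hGbig ρ hM, mul_le_mul_of_nonneg_left hFρ hB, mul_nonneg hB hr, K.2]
end

section
/- Let d ≥ 1, let Ω ⊂ ℝ^d be a bounded convex open set with positive Lebesgue measure, and let δ > 0. Then there exists a constant C > 0, depending only on Ω and δ, such that every continuously differentiable function f : Ω → ℝ with f ≥ 0 and |{x ∈ Ω : f(x) = 0}| ≥ δ satisfies ∫_Ω f(x)² dx ≤ C ∫_Ω |∇f(x)|² dx. -/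
open MeasureTheory Set Module
open scoped ENNReal

/-!
For `z` in the zero set and `x ∈ Ω`, the fundamental theorem of calculus along the segment
`[z, x] ⊆ Ω` and Cauchy–Schwarz give `f(x)² ≤ |x - z|² ∫₀¹ |∇f((1 - t) z + t x)|² dt`, and
`|x - z|² ≤ d · diam(Ω)²`. Integrating over `x ∈ Ω` and over `z` in the zero set bounds
`|{f = 0}| ∫_Ω f²` by `d · diam(Ω)² ∫_Ω ∫_Ω ∫₀¹ |∇f((1 - t) z + t x)|²`. For fixed `t ≥ 1/2` the
substitution `x ↦ (1 - t) z + t x` has Jacobian `t⁻ᵈ ≤ 2ᵈ` (for `t ≤ 1/2` substitute in `z`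
instead), so the triple integral is at most `2ᵈ |Ω| ∫_Ω |∇f|²`.
-/

section Scaling

variable {E : Type*} [NormedAddCommGroup E] [NormedSpace ℝ E] [FiniteDimensional ℝ E]
  [MeasurableSpace E] [BorelSpace E] (μ : Measure E) [μ.IsAddHaarMeasure]
  {g : E → ℝ≥0∞}

theorem lintegral_comp_add_smul (hg : Measurable g) (c : E) {t : ℝ} (ht : 0 < t) :
    ∫⁻ x, g (c + t • x) ∂μ = ENNReal.ofReal (t ^ finrank ℝ E)⁻¹ * ∫⁻ x, g x ∂μ := by
  rw [← lintegral_map (f := fun y => g (c + y)) (hg.comp (measurable_const_add c))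
      (measurable_const_smul t),
    Measure.map_addHaar_smul μ ht.ne', lintegral_smul_measure, abs_of_pos (by positivity),
    smul_eq_mul, lintegral_add_left_eq_self (fun y => g y) c]

theorem lintegral_comp_combo_le (hg : Measurable g) (z : E) {t : ℝ} (ht : 1 / 2 ≤ t) :
    ∫⁻ x, g ((1 - t) • z + t • x) ∂μ ≤ 2 ^ finrank ℝ E * ∫⁻ x, g x ∂μ := by
  have ht₀ : 0 < t := by linarith
  rw [lintegral_comp_add_smul μ hg _ ht₀]
  gcongr
  calc ENNReal.ofReal (t ^ finrank ℝ E)⁻¹ ≤ ENNReal.ofReal ((1 / 2) ^ finrank ℝ E)⁻¹ := by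
        gcongr
    _ = 2 ^ finrank ℝ E := by simp [ENNReal.ofReal_pow]

theorem setLIntegral_setLIntegral_comp_combo_le (hg : Measurable g) (s : Set E) (t : ℝ) :
    ∫⁻ z in s, ∫⁻ x in s, g ((1 - t) • z + t • x) ∂μ ∂μ ≤
      2 ^ finrank ℝ E * μ s * ∫⁻ x, g x ∂μ := by
  have inner_le {t : ℝ} (ht : 1 / 2 ≤ t) (z : E) :
      ∫⁻ x in s, g ((1 - t) • z + t • x) ∂μ ≤ 2 ^ finrank ℝ E * ∫⁻ x, g x ∂μ :=
    (setLIntegral_le_lintegral _ _).trans (lintegral_comp_combo_le μ hg z ht)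
  rcases le_total (1 / 2) t with ht' | ht'
  · calc _ ≤ ∫⁻ _ in s, 2 ^ finrank ℝ E * ∫⁻ x, g x ∂μ ∂μ := lintegral_mono (inner_le ht')
      _ = _ := by rw [setLIntegral_const]; ring
  · -- exchange the roles of `z` and `x`, so that the large weight is `1 - t ≥ 1 / 2`
    rw [lintegral_lintegral_swap (f := fun z x => g ((1 - t) • z + t • x))
      (hg.comp (by fun_prop : Measurable fun p : E × E => (1 - t) • p.1 + t • p.2)).aemeasurable]
    calc _ ≤ ∫⁻ _ in s, 2 ^ finrank ℝ E * ∫⁻ x, g x ∂μ ∂μ := by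
          refine lintegral_mono fun x => le_of_eq_of_le ?_ (inner_le (t := 1 - t) (by linarith) x)
          simp only [sub_sub_cancel, add_comm]
      _ = _ := by rw [setLIntegral_const]; ring

theorem setLIntegral_setLIntegral_lintegral_segment_le (hg : Measurable g) (s : Set E) :
    ∫⁻ z in s, ∫⁻ x in s, (∫⁻ t in Icc (0 : ℝ) 1, g ((1 - t) • z + t • x)) ∂μ ∂μ ≤
      2 ^ finrank ℝ E * μ s * ∫⁻ x, g x ∂μ := by
  have hmeas : Measurable fun p : E × E × ℝ => g ((1 - p.2.2) • p.1 + p.2.2 • p.2.1) :=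
    hg.comp (by fun_prop)
  have swap_inner (z : E) :
      ∫⁻ x in s, (∫⁻ t in Icc (0 : ℝ) 1, g ((1 - t) • z + t • x)) ∂μ =
        ∫⁻ t in Icc (0 : ℝ) 1, ∫⁻ x in s, g ((1 - t) • z + t • x) ∂μ :=
    lintegral_lintegral_swap (f := fun x t => g ((1 - t) • z + t • x))
      (hmeas.comp (by fun_prop : Measurable fun p : E × ℝ => (z, p.1, p.2))).aemeasurable
  simp_rw [swap_inner]
  rw [lintegral_lintegral_swap (f := fun z t => ∫⁻ x in s, g ((1 - t) • z + t • x) ∂μ)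
    (hmeas.comp (by fun_prop : Measurable fun q : (E × ℝ) × E => (q.1.1, q.2, q.1.2))
      |>.lintegral_prod_right').aemeasurable]
  calc _ ≤ ∫⁻ _ in Icc (0 : ℝ) 1, 2 ^ finrank ℝ E * μ s * ∫⁻ x, g x ∂μ :=
        lintegral_mono (setLIntegral_setLIntegral_comp_combo_le μ hg s)
    _ = _ := by simp

end Scaling

theorem sq_lintegral_le_lintegral_sq {α : Type*} [MeasurableSpace α] {μ : Measure α}
    [IsProbabilityMeasure μ] {u : α → ℝ≥0∞} (hu : AEMeasurable u μ) :
    (∫⁻ a, u a ∂μ) ^ 2 ≤ ∫⁻ a, u a ^ 2 ∂μ := by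
  have h := ENNReal.lintegral_mul_le_Lp_mul_Lq μ Real.HolderConjugate.two_two hu
    (aemeasurable_const (b := 1))
  simp only [Pi.mul_apply, mul_one, ENNReal.one_rpow, lintegral_const, measure_univ,
    ENNReal.one_rpow, mul_one] at h
  calc (∫⁻ a, u a ∂μ) ^ 2 ≤ ((∫⁻ a, u a ^ (2 : ℝ) ∂μ) ^ (1 / (2 : ℝ))) ^ 2 := by gcongr
    _ = ∫⁻ a, u a ^ 2 ∂μ := by
      rw [← ENNReal.rpow_natCast, ← ENNReal.rpow_mul]
      norm_num

theorem ofReal_sq_sub_le_lintegral_fderiv_segment {E : Type*} [NormedAddCommGroup E]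
    [NormedSpace ℝ E] {Ω : Set E} (hconv : Convex ℝ Ω) (hopen : IsOpen Ω) {f : E → ℝ} (hf : ContDiffOn ℝ 1 f Ω)
    {x z : E} (hx : x ∈ Ω) (hz : z ∈ Ω) :
    ENNReal.ofReal ((f x - f z) ^ 2) ≤
      ∫⁻ t in Icc (0 : ℝ) 1, ENNReal.ofReal (fderiv ℝ f ((1 - t) • z + t • x) (x - z) ^ 2) := by
  set γ : ℝ → E := fun t => (1 - t) • z + t • x
  set u : ℝ → ℝ := fun t => fderiv ℝ f (γ t) (x - z)
  have hγΩ (t : ℝ) (ht : t ∈ Icc (0 : ℝ) 1) : γ t ∈ Ω :=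
    hconv hz hx (by linarith [ht.2]) ht.1 (by ring)
  have hγ (t : ℝ) : HasDerivAt γ (x - z) t :=
    ((((hasDerivAt_id t).const_sub 1).smul_const z).add
      ((hasDerivAt_id t).smul_const x)).congr_deriv (by module)
  have hu : ContinuousOn u (Icc 0 1) :=
    ((hf.continuousOn_fderiv_of_isOpen hopen le_rfl).comp (by fun_prop) hγΩ).clm_apply
      continuousOn_const
  have hftc : f x - f z = ∫ t in (0 : ℝ)..1, u t := by
    have := intervalIntegral.integral_eq_sub_of_hasDerivAt (f := f ∘ γ) (a := 0) (b := 1)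
      (fun t ht => ?_) (hu.intervalIntegrable_of_Icc zero_le_one)
    · simpa [γ] using this.symm
    rw [uIcc_of_le zero_le_one] at ht
    exact ((hf.differentiableOn one_ne_zero).differentiableAt
      (hopen.mem_nhds (hγΩ t ht))).hasFDerivAt.comp_hasDerivAt t (hγ t)
  have habs : ENNReal.ofReal |f x - f z| ≤ ∫⁻ t in Icc (0 : ℝ) 1, ENNReal.ofReal |u t| := by
    calc ENNReal.ofReal |f x - f z| ≤ ENNReal.ofReal (∫ t in (0 : ℝ)..1, |u t|) := by
          rw [hftc]
          gcongr
          exact intervalIntegral.abs_integral_le_integral_abs zero_le_one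
      _ = ∫⁻ t in Ioc (0 : ℝ) 1, ENNReal.ofReal |u t| := by
          rw [intervalIntegral.integral_of_le zero_le_one, ofReal_integral_eq_lintegral_ofReal
            ((hu.abs.integrableOn_Icc).mono_set Ioc_subset_Icc_self)
            (Filter.Eventually.of_forall fun t => abs_nonneg _)]
      _ ≤ ∫⁻ t in Icc (0 : ℝ) 1, ENNReal.ofReal |u t| :=
          lintegral_mono_set Ioc_subset_Icc_self
  calc ENNReal.ofReal ((f x - f z) ^ 2) = ENNReal.ofReal |f x - f z| ^ 2 := by
        rw [← ENNReal.ofReal_pow (abs_nonneg _), sq_abs]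
    _ ≤ (∫⁻ t in Icc (0 : ℝ) 1, ENNReal.ofReal |u t|) ^ 2 := by gcongr
    _ ≤ ∫⁻ t in Icc (0 : ℝ) 1, ENNReal.ofReal |u t| ^ 2 :=
        have : IsProbabilityMeasure (volume.restrict (Icc (0 : ℝ) 1)) := ⟨by simp⟩
        sq_lintegral_le_lintegral_sq (hu.abs.aemeasurable measurableSet_Icc).ennreal_ofReal
    _ = _ := by
        simp_rw [← ENNReal.ofReal_pow (abs_nonneg _), sq_abs]
        rfl

theorem sq_apply_le_sum_sq_mul_sum_sq {ι : Type*} [Fintype ι] [DecidableEq ι]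
    (L : (ι → ℝ) →L[ℝ] ℝ) (v : ι → ℝ) :
    L v ^ 2 ≤ (∑ i, v i ^ 2) * ∑ i, L (Pi.single i 1) ^ 2 := by
  have hL : L v = ∑ i, v i * L (Pi.single i 1) := by
    conv_lhs => rw [pi_eq_sum_univ' v]
    simp [map_sum, smul_eq_mul]
  rw [hL]
  exact Finset.sum_mul_sq_le_sq_mul_sq _ _ _

theorem sum_sq_sub_le_card_mul_diam_sq {ι : Type*} [Fintype ι] {s : Set (ι → ℝ)}
    (hs : Bornology.IsBounded s) {x z : ι → ℝ} (hx : x ∈ s) (hz : z ∈ s) :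
    ∑ i, (x i - z i) ^ 2 ≤ Fintype.card ι * Metric.diam s ^ 2 := by
  calc ∑ i, (x i - z i) ^ 2 ≤ ∑ _i : ι, Metric.diam s ^ 2 := by
        refine Finset.sum_le_sum fun i _ => ?_
        rw [sq_le_sq, abs_of_nonneg Metric.diam_nonneg, ← Real.dist_eq]
        exact (dist_le_pi_dist x z i).trans (Metric.dist_le_diam_of_mem hs hx hz)
    _ = _ := by simp

section Poincare

variable {ι : Type*} [Fintype ι] [DecidableEq ι] {Ω : Set (ι → ℝ)} {f : (ι → ℝ) → ℝ}

noncomputable def gradNormSq (f : (ι → ℝ) → ℝ) (y : ι → ℝ) : ℝ :=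
  ∑ i, fderiv ℝ f y (Pi.single i 1) ^ 2

theorem measurable_gradNormSq (f : (ι → ℝ) → ℝ) : Measurable (gradNormSq f) :=
  Finset.measurable_sum _ fun _ _ => (measurable_fderiv_apply_const ℝ f _).pow_const 2

theorem ofReal_sq_le_lintegral_gradNormSq_segment (hbdd : Bornology.IsBounded Ω)
    (hconv : Convex ℝ Ω) (hopen : IsOpen Ω) (hf : ContDiffOn ℝ 1 f Ω) {x z : ι → ℝ}
    (hx : x ∈ Ω) (hz : z ∈ Ω) (hfz : f z = 0) :
    ENNReal.ofReal (f x ^ 2) ≤ ENNReal.ofReal (Fintype.card ι * Metric.diam Ω ^ 2) *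
      ∫⁻ t in Icc (0 : ℝ) 1,
        Ω.indicator (fun y => ENNReal.ofReal (gradNormSq f y)) ((1 - t) • z + t • x) := by
  have hG : Measurable (Ω.indicator fun y => ENNReal.ofReal (gradNormSq f y)) :=
    (measurable_gradNormSq f).ennreal_ofReal.indicator hopen.measurableSet
  rw [← lintegral_const_mul' _ _ ENNReal.ofReal_ne_top]
  calc ENNReal.ofReal (f x ^ 2) = ENNReal.ofReal ((f x - f z) ^ 2) := by rw [hfz, sub_zero]
    _ ≤ _ := ofReal_sq_sub_le_lintegral_fderiv_segment hconv hopen hf hx hz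
    _ ≤ _ := by
      refine setLIntegral_mono ((hG.comp (by fun_prop)).const_mul _) fun t ht => ?_
      rw [indicator_of_mem (hconv hz hx (by linarith [ht.2]) ht.1 (by ring)),
        ← ENNReal.ofReal_mul (by positivity)]
      gcongr
      exact (sq_apply_le_sum_sq_mul_sum_sq _ _).trans (mul_le_mul_of_nonneg_right
        (sum_sq_sub_le_card_mul_diam_sq hbdd hx hz) (Finset.sum_nonneg fun _ _ => sq_nonneg _))

theorem measure_zeroSet_mul_lintegral_sq_le (hbdd : Bornology.IsBounded Ω)
    (hconv : Convex ℝ Ω) (hopen : IsOpen Ω) (hf : ContDiffOn ℝ 1 f Ω) :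
    volume {x ∈ Ω | f x = 0} * ∫⁻ x in Ω, ENNReal.ofReal (f x ^ 2) ≤
      ENNReal.ofReal (Fintype.card ι * Metric.diam Ω ^ 2) * 2 ^ Fintype.card ι * volume Ω *
        ∫⁻ x in Ω, ENNReal.ofReal (gradNormSq f x) := by
  set G := Ω.indicator fun y => ENNReal.ofReal (gradNormSq f y)
  set K := ENNReal.ofReal (Fintype.card ι * Metric.diam Ω ^ 2)
  have hG : Measurable G := (measurable_gradNormSq f).ennreal_ofReal.indicator hopen.measurableSet
  have hsegment : Measurable fun p : (ι → ℝ) × (ι → ℝ) =>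
      ∫⁻ t in Icc (0 : ℝ) 1, G ((1 - t) • p.1 + t • p.2) :=
    (hG.comp (by fun_prop : Measurable fun q : ((ι → ℝ) × (ι → ℝ)) × ℝ =>
      (1 - q.2) • q.1.1 + q.2 • q.1.2)).lintegral_prod_right'
  have key (z : ι → ℝ) (hz : z ∈ {x ∈ Ω | f x = 0}) :
      ∫⁻ x in Ω, ENNReal.ofReal (f x ^ 2) ≤
        K * ∫⁻ x in Ω, ∫⁻ t in Icc (0 : ℝ) 1, G ((1 - t) • z + t • x) := by
    rw [← lintegral_const_mul' _ _ ENNReal.ofReal_ne_top]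
    exact setLIntegral_mono ((hsegment.comp measurable_prodMk_left).const_mul _) fun x hx =>
      ofReal_sq_le_lintegral_gradNormSq_segment hbdd hconv hopen hf hx hz.1 hz.2
  calc volume {x ∈ Ω | f x = 0} * ∫⁻ x in Ω, ENNReal.ofReal (f x ^ 2)
      = ∫⁻ _ in {x ∈ Ω | f x = 0}, ∫⁻ x in Ω, ENNReal.ofReal (f x ^ 2) := by
        rw [setLIntegral_const, mul_comm]
    _ ≤ ∫⁻ z in {x ∈ Ω | f x = 0},
          K * ∫⁻ x in Ω, ∫⁻ t in Icc (0 : ℝ) 1, G ((1 - t) • z + t • x) :=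
        setLIntegral_mono (hsegment.lintegral_prod_right'.const_mul _) key
    _ ≤ ∫⁻ z in Ω, K * ∫⁻ x in Ω, ∫⁻ t in Icc (0 : ℝ) 1, G ((1 - t) • z + t • x) :=
        lintegral_mono_set (sep_subset _ _)
    _ = K * ∫⁻ z in Ω, ∫⁻ x in Ω, ∫⁻ t in Icc (0 : ℝ) 1, G ((1 - t) • z + t • x) :=
        lintegral_const_mul' _ _ ENNReal.ofReal_ne_top
    _ ≤ K * (2 ^ Fintype.card ι * volume Ω * ∫⁻ y, G y) := by
        gcongr
        simpa using setLIntegral_setLIntegral_lintegral_segment_le volume hG Ω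
    _ = _ := by rw [lintegral_indicator hopen.measurableSet]; ring

end Poincare

theorem stmt5_general (d : ℕ) (Ω : Set (Fin d → ℝ))
    (hbdd : Bornology.IsBounded Ω) (hconv : Convex ℝ Ω) (hopen : IsOpen Ω)
    (δ : ℝ) (hδ : 0 < δ) :
    ∃ C > (0:ℝ), ∀ f : (Fin d → ℝ) → ℝ,
      ContDiffOn ℝ 1 f Ω → (∀ x ∈ Ω, 0 ≤ f x) →
      ENNReal.ofReal δ ≤ volume {x ∈ Ω | f x = 0} →
      ∫⁻ x in Ω, ENNReal.ofReal ((f x) ^ 2) ≤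
        ENNReal.ofReal C *
          ∫⁻ x in Ω, ENNReal.ofReal (∑ i, (fderiv ℝ f x (Pi.single i 1)) ^ 2) := by
  set A := ENNReal.ofReal (d * Metric.diam Ω ^ 2) * 2 ^ d * volume Ω
  have hA : A ≠ ⊤ :=
    ENNReal.mul_ne_top (ENNReal.mul_ne_top ENNReal.ofReal_ne_top (by simp))
      (hbdd.measure_lt_top (μ := volume)).ne
  refine ⟨(A.toReal + 1) / δ, by positivity, fun f hf _ hzero => ?_⟩
  have hδ' : ENNReal.ofReal δ ≠ 0 := by simpa using hδ
  refine (ENNReal.mul_le_mul_iff_right hδ' ENNReal.ofReal_ne_top).mp ?_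
  calc ENNReal.ofReal δ * ∫⁻ x in Ω, ENNReal.ofReal (f x ^ 2)
      ≤ A * ∫⁻ x in Ω, ENNReal.ofReal (gradNormSq f x) := by
        refine (mul_le_mul_left hzero _).trans ?_
        simpa only [Fintype.card_fin] using measure_zeroSet_mul_lintegral_sq_le hbdd hconv hopen hf
    _ ≤ ENNReal.ofReal (A.toReal + 1) * ∫⁻ x in Ω, ENNReal.ofReal (gradNormSq f x) := by
        gcongr
        exact (ENNReal.le_ofReal_iff_toReal_le hA (by positivity)).mpr (by linarith)
    _ = _ := by
        rw [← mul_assoc, ← ENNReal.ofReal_mul hδ.le, mul_div_cancel₀ _ hδ.ne']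
        rfl

/-- On a bounded convex open set `Ω ⊂ ℝ^d` of positive measure, for every
`δ > 0` there is `C > 0` such that every nonnegative `C¹` function `f` vanishing on a set
of measure at least `δ` satisfies `∫_Ω f² ≤ C ∫_Ω |∇f|²`. -/
theorem stmt5 (d : ℕ) (hd : 1 ≤ d) (Ω : Set (Fin d → ℝ))
    (hbdd : Bornology.IsBounded Ω) (hconv : Convex ℝ Ω) (hopen : IsOpen Ω)
    (hvol : 0 < volume Ω) (δ : ℝ) (hδ : 0 < δ) :
    ∃ C > (0:ℝ), ∀ f : (Fin d → ℝ) → ℝ,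
      ContDiffOn ℝ 1 f Ω → (∀ x ∈ Ω, 0 ≤ f x) →
      ENNReal.ofReal δ ≤ volume {x ∈ Ω | f x = 0} →
      ∫⁻ x in Ω, ENNReal.ofReal ((f x) ^ 2) ≤
        ENNReal.ofReal C *
          ∫⁻ x in Ω, ENNReal.ofReal (∑ i, (fderiv ℝ f x (Pi.single i 1)) ^ 2) :=
  stmt5_general d Ω hbdd hconv hopen δ hδ
end

section
/- Let f : (0,∞) → ℝ be differentiable with f(ρ) > 0 for all ρ > 0, and suppose that ρ f'(ρ)/f(ρ) → α as ρ → 0⁺, for some real number α. Then for every η > 0 there exist ρ₀ > 0, c > 0 and C > 0 such that for all ρ ∈ (0, ρ₀]: c ρ^{α+η} ≤ f(ρ) ≤ C ρ^{α−η}. -/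
open Filter Set Real

/-
Eventually `(α - η) f ≤ ρ f' ≤ (α + η) f`, and `ρ f' ≤ β f` is exactly the condition that
`ρ ↦ f(ρ) ρ^{-β}` has nonpositive derivative. Hence `f(ρ) ρ^{-(α+η)}` decreases and
`f(ρ) ρ^{-(α-η)}` increases on `(0, ρ₀]`, so comparing with their values at `ρ₀` gives both bounds.
-/

theorem hasDerivAt_mul_rpow_neg {f : ℝ → ℝ} {f' x : ℝ} (β : ℝ) (hf : HasDerivAt f f' x)
    (hx : 0 < x) :
    HasDerivAt (fun y => f y * y ^ (-β)) (x ^ (-β - 1) * (x * f' - β * f x)) x := by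
  refine (hf.mul (hasDerivAt_rpow_const (p := -β) (Or.inl hx.ne'))).congr_deriv ?_
  rw [show x ^ (-β) = x ^ (-β - 1) * x by rw [← rpow_add_one hx.ne', sub_add_cancel]]
  ring

theorem antitoneOn_mul_rpow_neg_of_mul_deriv_le {f : ℝ → ℝ} {β a : ℝ}
    (hdiff : ∀ x ∈ Ioc 0 a, DifferentiableAt ℝ f x)
    (hle : ∀ x ∈ Ioo 0 a, x * deriv f x ≤ β * f x) :
    AntitoneOn (fun x => f x * x ^ (-β)) (Ioc 0 a) := by
  have hderiv : ∀ x ∈ Ioc 0 a, HasDerivAt (fun y => f y * y ^ (-β))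
      (x ^ (-β - 1) * (x * deriv f x - β * f x)) x := fun x hx =>
    hasDerivAt_mul_rpow_neg β (hdiff x hx).hasDerivAt hx.1
  refine antitoneOn_of_deriv_nonpos (convex_Ioc 0 a)
    (fun x hx => (hderiv x hx).continuousAt.continuousWithinAt)
    (fun x hx => (hderiv x (interior_subset hx)).differentiableAt.differentiableWithinAt)
    fun x hx => ?_
  rw [interior_Ioc] at hx
  rw [(hderiv x (Ioo_subset_Ioc_self hx)).deriv]
  exact mul_nonpos_of_nonneg_of_nonpos (rpow_nonneg hx.1.le _) (sub_nonpos.2 (hle x hx))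

theorem monotoneOn_mul_rpow_neg_of_le_mul_deriv {f : ℝ → ℝ} {β a : ℝ}
    (hdiff : ∀ x ∈ Ioc 0 a, DifferentiableAt ℝ f x)
    (hle : ∀ x ∈ Ioo 0 a, β * f x ≤ x * deriv f x) :
    MonotoneOn (fun x => f x * x ^ (-β)) (Ioc 0 a) := by
  have hanti := antitoneOn_mul_rpow_neg_of_mul_deriv_le (f := -f) (β := β) (a := a)
    (fun x hx => (hdiff x hx).neg) fun x hx => by
      simpa only [deriv.neg', Pi.neg_apply, mul_neg, neg_le_neg_iff] using hle x hx
  intro x hx y hy hxy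
  simpa only [Pi.neg_apply, neg_mul, neg_le_neg_iff] using hanti hx hy hxy

/-- If `f > 0` is differentiable on `(0,∞)` and `ρ f'(ρ)/f(ρ) → α` as
`ρ → 0⁺`, then for every `η > 0` there are `ρ₀, c, C > 0` with
`c ρ^{α+η} ≤ f(ρ) ≤ C ρ^{α−η}` for all `ρ ∈ (0, ρ₀]`. -/
theorem stmt10 (f : ℝ → ℝ)
    (hdiff : ∀ ρ > (0:ℝ), DifferentiableAt ℝ f ρ)
    (hpos : ∀ ρ > (0:ℝ), 0 < f ρ)
    (α : ℝ)
    (hlim : Tendsto (fun ρ => ρ * deriv f ρ / f ρ) (nhdsWithin 0 (Set.Ioi 0)) (nhds α)) :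
    ∀ η > (0:ℝ), ∃ ρ₀ > (0:ℝ), ∃ c > (0:ℝ), ∃ C > (0:ℝ),
      ∀ ρ ∈ Set.Ioc (0:ℝ) ρ₀, c * ρ ^ (α + η) ≤ f ρ ∧ f ρ ≤ C * ρ ^ (α - η) := by
  intro η hη
  obtain ⟨ρ₀, hρ₀, hnear⟩ := mem_nhdsGT_iff_exists_Ioo_subset.mp
    (hlim.eventually (Ioo_mem_nhds (sub_lt_self α hη) (lt_add_of_pos_right α hη)))
  have hdiff₀ : ∀ x ∈ Ioc 0 ρ₀, DifferentiableAt ℝ f x := fun x hx => hdiff x hx.1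
  have hbounds : ∀ x ∈ Ioo 0 ρ₀,
      (α - η) * f x < x * deriv f x ∧ x * deriv f x < (α + η) * f x := fun x hx => by
    obtain ⟨hlo, hhi⟩ := hnear hx
    exact ⟨(lt_div_iff₀ (hpos x hx.1)).1 hlo, (div_lt_iff₀ (hpos x hx.1)).1 hhi⟩
  have hanti := antitoneOn_mul_rpow_neg_of_mul_deriv_le hdiff₀ fun x hx => (hbounds x hx).2.le
  have hmono := monotoneOn_mul_rpow_neg_of_le_mul_deriv hdiff₀ fun x hx => (hbounds x hx).1.le
  have hρ₀mem : ρ₀ ∈ Ioc 0 ρ₀ := ⟨hρ₀, le_rfl⟩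
  refine ⟨ρ₀, hρ₀, f ρ₀ * ρ₀ ^ (-(α + η)), mul_pos (hpos ρ₀ hρ₀) (rpow_pos_of_pos hρ₀ _),
    f ρ₀ * ρ₀ ^ (-(α - η)), mul_pos (hpos ρ₀ hρ₀) (rpow_pos_of_pos hρ₀ _), fun ρ hρ => ?_⟩
  have hlower := hanti hρ hρ₀mem hρ.2
  have hupper := hmono hρ hρ₀mem hρ.2
  simp only [rpow_neg hρ.1.le, ← div_eq_mul_inv] at hlower hupper
  exact ⟨(le_div_iff₀ (rpow_pos_of_pos hρ.1 _)).1 hlower,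
    (div_le_iff₀ (rpow_pos_of_pos hρ.1 _)).1 hupper⟩
end

section
/- Let μ : [0,∞) → ℝ be continuous on [0,∞) and continuously differentiable on (0,∞) with μ(ρ) > 0 and μ'(ρ) > 0 for every ρ > 0, satisfying the vacuum condition with exponent α ∈ (2/3, 4] and the large-density condition with exponent β ∈ (1,4). Then: (i) the function s ↦ √(μ(s)) μ'(s)/s is Lebesgue integrable on (0, T) for every T > 0, so that Z(ρ) = ∫₀^ρ √(μ(s)) μ'(s)/s ds is well defined and finite for every ρ ≥ 0; and (ii) for every η with 0 < η < β − 2/3 there exist M > 0 and C > 0 such that Z(ρ) ≥ C ρ^{(3(β−η)−2)/2} for all ρ ≥ M; in particular Z(ρ) → ∞ as ρ → ∞. -/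
/-!
If `c μ ≤ ρ μ'` on an interval, then `μ ρ / ρ ^ c` is nondecreasing there. Near `0` the
elasticity `ρ μ' / μ` lies between some `c > 2/3` and a constant `K`, so `μ ρ ≤ A ρ ^ c` and the
integrand `√μ μ' / ρ ≤ K μ ^ (3/2) / ρ ^ 2` is at most a multiple of `ρ ^ (3c/2 - 2)`, which is
integrable at `0` because `3c/2 - 2 > -1`. For large `ρ` the elasticity exceeds `c = β - η`,
so `μ ρ ≥ k ρ ^ c`, the integrand is at least a multiple of `ρ ^ (3c/2 - 2)`, and its integral
grows like `ρ ^ ((3c - 2)/2)`.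
-/

open Filter MeasureTheory Set Topology

noncomputable def zIntegrand (μ : ℝ → ℝ) (s : ℝ) : ℝ := Real.sqrt (μ s) * deriv μ s / s

lemma monotoneOn_div_rpow_of_mul_le_mul_deriv {f f' : ℝ → ℝ} {c : ℝ} {D : Set ℝ}
    (hD : Convex ℝ D) (hD0 : D ⊆ Ioi 0) (hf : ∀ x ∈ D, HasDerivAt f (f' x) x)
    (h : ∀ x ∈ D, c * f x ≤ x * f' x) : MonotoneOn (fun x => f x / x ^ c) D := by
  have hderiv : ∀ x ∈ D, HasDerivAt (fun x => f x / x ^ c)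
      ((f' x * x ^ c - f x * (c * x ^ (c - 1))) / (x ^ c) ^ 2) x := fun x hx =>
    (hf x hx).div (Real.hasDerivAt_rpow_const (Or.inl (hD0 hx).ne'))
      (Real.rpow_pos_of_pos (hD0 hx) c).ne'
  refine monotoneOn_of_deriv_nonneg hD
    (fun x hx => (hderiv x hx).continuousAt.continuousWithinAt)
    (fun x hx => (hderiv x (interior_subset hx)).differentiableAt.differentiableWithinAt)
    fun x hx => ?_
  replace hx := interior_subset hx
  have hx0 : 0 < x := hD0 hx
  have hnum : f' x * x ^ c - f x * (c * x ^ (c - 1)) = x ^ (c - 1) * (x * f' x - c * f x) := by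
    rw [Real.rpow_sub_one hx0.ne']; field_simp
  rw [(hderiv x hx).deriv, hnum]
  exact div_nonneg (mul_nonneg (Real.rpow_nonneg hx0.le _) (sub_nonneg.2 (h x hx))) (sq_nonneg _)

lemma sqrt_mul_rpow_mul_div_sq {A s : ℝ} (c : ℝ) (hA : 0 ≤ A) (hs : 0 < s) :
    Real.sqrt (A * s ^ c) * (A * s ^ c) / s ^ 2 = A * Real.sqrt A * s ^ (3 * c / 2 - 2) := by
  rw [Real.sqrt_mul hA, Real.sqrt_eq_rpow (s ^ c), ← Real.rpow_mul hs.le, Real.rpow_sub hs,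
    Real.rpow_two, show 3 * c / 2 = c * (1 / 2) + c by ring, Real.rpow_add hs]
  ring

lemma sqrt_mul_div_le_of_le_rpow {m d s A K c : ℝ} (hs : 0 < s) (hA : 0 ≤ A) (hK : 0 ≤ K)
    (hd : 0 ≤ d) (hm : m ≤ A * s ^ c) (hsd : s * d ≤ K * m) :
    Real.sqrt m * d / s ≤ K * (A * Real.sqrt A) * s ^ (3 * c / 2 - 2) := by
  rw [mul_assoc, ← sqrt_mul_rpow_mul_div_sq c hA hs]
  calc Real.sqrt m * d / s = Real.sqrt m * (s * d) / s ^ 2 := by field_simp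
    _ ≤ Real.sqrt (A * s ^ c) * (K * (A * s ^ c)) / s ^ 2 := by
      refine div_le_div_of_nonneg_right ?_ (sq_nonneg s)
      exact mul_le_mul (Real.sqrt_le_sqrt hm) (hsd.trans (mul_le_mul_of_nonneg_left hm hK))
        (by positivity) (Real.sqrt_nonneg _)
    _ = _ := by ring

lemma le_sqrt_mul_div_of_rpow_le {m d s k c : ℝ} (hs : 0 < s) (hk : 0 ≤ k) (hc : 0 ≤ c)
    (hm : k * s ^ c ≤ m) (hsd : c * m ≤ s * d) :
    c * (k * Real.sqrt k) * s ^ (3 * c / 2 - 2) ≤ Real.sqrt m * d / s := by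
  rw [mul_assoc, ← sqrt_mul_rpow_mul_div_sq c hk hs]
  calc _ = Real.sqrt (k * s ^ c) * (c * (k * s ^ c)) / s ^ 2 := by ring
    _ ≤ Real.sqrt m * (s * d) / s ^ 2 := by
      refine div_le_div_of_nonneg_right ?_ (sq_nonneg s)
      exact mul_le_mul (Real.sqrt_le_sqrt hm) ((mul_le_mul_of_nonneg_left hm hc).trans hsd)
        (by positivity) (Real.sqrt_nonneg _)
    _ = Real.sqrt m * d / s := by field_simp

lemma eventually_mul_le_of_tendsto_div {ι : Type*} {l : Filter ι} {f g : ι → ℝ} {a c : ℝ}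
    (hg : ∀ᶠ x in l, 0 < g x) (h : Tendsto (fun x => f x / g x) l (𝓝 a)) (hc : c < a) :
    ∀ᶠ x in l, c * g x ≤ f x := by
  filter_upwards [hg, h.eventually (eventually_gt_nhds hc)] with x hgx hx
  exact ((lt_div_iff₀ hgx).1 hx).le

lemma eventually_le_mul_of_tendsto_div {ι : Type*} {l : Filter ι} {f g : ι → ℝ} {a c : ℝ}
    (hg : ∀ᶠ x in l, 0 < g x) (h : Tendsto (fun x => f x / g x) l (𝓝 a)) (hc : a < c) :
    ∀ᶠ x in l, f x ≤ c * g x := by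
  filter_upwards [hg, h.eventually (eventually_lt_nhds hc)] with x hgx hx
  exact ((div_lt_iff₀ hgx).1 hx).le

lemma intervalIntegrable_of_le_rpow {g : ℝ → ℝ} {δ C p : ℝ} (hp : -1 < p) (hδ : 0 ≤ δ)
    (hg : ContinuousOn g (Ioi 0)) (hg0 : ∀ s ∈ Ioc 0 δ, 0 ≤ g s)
    (hle : ∀ s ∈ Ioc 0 δ, g s ≤ C * s ^ p) : IntervalIntegrable g volume 0 δ := by
  refine ((intervalIntegral.intervalIntegrable_rpow' hp).const_mul C).mono_fun' ?_ ?_ <;>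
    rw [uIoc_of_le hδ]
  · exact (hg.mono Ioc_subset_Ioi_self).aestronglyMeasurable measurableSet_Ioc
  · refine (ae_restrict_iff' measurableSet_Ioc).2 (Eventually.of_forall fun s hs => ?_)
    show ‖g s‖ ≤ C * s ^ p
    rw [Real.norm_of_nonneg (hg0 s hs)]
    exact hle s hs

lemma eventually_rpow_le_integral {g : ℝ → ℝ} {K p : ℝ} (hK : 0 ≤ K) (hp : -1 < p)
    (hg : ∀ T > 0, IntervalIntegrable g volume 0 T) (hg0 : ∀ s ≥ 0, 0 ≤ g s)
    (hle : ∀ᶠ s in atTop, K * s ^ p ≤ g s) :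
    ∀ᶠ ρ in atTop, K / (2 * (p + 1)) * ρ ^ (p + 1) ≤ ∫ s in (0)..ρ, g s := by
  obtain ⟨M, hM⟩ := eventually_atTop.1 (hle.and (eventually_gt_atTop 0))
  have hM0 : 0 < M := (hM M le_rfl).2
  have hp1 : 0 < p + 1 := by linarith
  filter_upwards [eventually_ge_atTop M,
    (tendsto_rpow_atTop hp1).eventually_ge_atTop (2 * M ^ (p + 1))] with ρ hρM hρ
  have hMρ : IntervalIntegrable g volume M ρ :=
    (hg ρ (hM0.trans_le hρM)).mono_set (uIcc_subset_uIcc (mem_uIcc_of_le hM0.le hρM) right_mem_uIcc)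
  calc K / (2 * (p + 1)) * ρ ^ (p + 1) ≤ K * ((ρ ^ (p + 1) - M ^ (p + 1)) / (p + 1)) := by
        rw [div_mul_eq_mul_div, mul_div_assoc, ← div_div]
        gcongr
        linarith
    _ = ∫ s in M..ρ, K * s ^ p := by
        rw [intervalIntegral.integral_const_mul, integral_rpow (Or.inl hp)]
    _ ≤ ∫ s in M..ρ, g s := intervalIntegral.integral_mono_on hρM
        ((intervalIntegral.intervalIntegrable_rpow' hp).const_mul K) hMρ fun s hs => (hM s hs.1).1
    _ ≤ ∫ s in (0)..ρ, g s := by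
        rw [← intervalIntegral.integral_add_adjacent_intervals (hg M hM0) hMρ]
        exact le_add_of_nonneg_left
          (intervalIntegral.integral_nonneg hM0.le fun s hs => hg0 s hs.1)

section

variable {μ : ℝ → ℝ}

lemma zIntegrand_nonneg (hderiv : ∀ s > 0, 0 ≤ deriv μ s) {s : ℝ} (hs : 0 ≤ s) :
    0 ≤ zIntegrand μ s := by
  rcases hs.eq_or_lt with rfl | hs
  · simp [zIntegrand]
  · exact div_nonneg (mul_nonneg (Real.sqrt_nonneg _) (hderiv s hs)) hs.le

lemma continuousOn_zIntegrand (hμ : ContDiffOn ℝ 1 μ (Ioi 0)) :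
    ContinuousOn (zIntegrand μ) (Ioi 0) :=
  (hμ.continuousOn.sqrt.mul (hμ.continuousOn_deriv_of_isOpen isOpen_Ioi le_rfl)).div
    continuousOn_id fun _ hs => ne_of_gt hs

lemma exists_zIntegrand_le_rpow (hμ : DifferentiableOn ℝ μ (Ioi 0)) (hpos : ∀ s > 0, 0 < μ s)
    (hderiv : ∀ s > 0, 0 ≤ deriv μ s) {α c : ℝ} (hc : c < α)
    (hvac : Tendsto (fun ρ => ρ * deriv μ ρ / μ ρ) (𝓝[>] 0) (𝓝 α)) :
    ∃ δ > 0, ∃ C, ∀ s ∈ Ioc 0 δ, zIntegrand μ s ≤ C * s ^ (3 * c / 2 - 2) := by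
  have hμpos : ∀ᶠ s in 𝓝[>] (0 : ℝ), 0 < μ s := eventually_nhdsWithin_of_forall hpos
  obtain ⟨δ, hδ, hsub⟩ := mem_nhdsGT_iff_exists_Ioc_subset.1
    ((eventually_mul_le_of_tendsto_div hμpos hvac hc).and
      (eventually_le_mul_of_tendsto_div hμpos hvac ((le_abs_self α).trans_lt (lt_add_one _))))
  have hmono := monotoneOn_div_rpow_of_mul_le_mul_deriv (convex_Ioc 0 δ) (fun _ hs => hs.1)
    (fun s hs => (hμ.differentiableAt (Ioi_mem_nhds hs.1)).hasDerivAt) fun s hs => (hsub hs).1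
  have hA : 0 ≤ μ δ / δ ^ c := div_nonneg (hpos δ hδ).le (Real.rpow_nonneg (le_of_lt hδ) c)
  refine ⟨δ, hδ, (|α| + 1) * (μ δ / δ ^ c * Real.sqrt (μ δ / δ ^ c)), fun s hs => ?_⟩
  have hμs : μ s ≤ μ δ / δ ^ c * s ^ c :=
    (div_le_iff₀ (Real.rpow_pos_of_pos hs.1 c)).1 (hmono hs (right_mem_Ioc.2 hδ) hs.2)
  exact sqrt_mul_div_le_of_le_rpow hs.1 hA (by positivity) (hderiv s hs.1) hμs (hsub hs).2

lemma intervalIntegrable_zIntegrand (hμ : ContDiffOn ℝ 1 μ (Ioi 0)) (hpos : ∀ s > 0, 0 < μ s)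
    (hderiv : ∀ s > 0, 0 ≤ deriv μ s) {α : ℝ} (hα : 2 / 3 < α)
    (hvac : Tendsto (fun ρ => ρ * deriv μ ρ / μ ρ) (𝓝[>] 0) (𝓝 α)) {T : ℝ} (hT : 0 < T) :
    IntervalIntegrable (zIntegrand μ) volume 0 T := by
  obtain ⟨c, hc, hcα⟩ := exists_between hα
  obtain ⟨δ, hδ, C, hle⟩ :=
    exists_zIntegrand_le_rpow (hμ.differentiableOn one_ne_zero) hpos hderiv hcα hvac
  have hcont := continuousOn_zIntegrand hμ
  refine (intervalIntegrable_of_le_rpow (by linarith) hδ.le hcont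
    (fun s hs => zIntegrand_nonneg hderiv hs.1.le) hle).trans (hcont.mono ?_).intervalIntegrable
  exact fun s hs => (lt_min hδ hT).trans_le hs.1

lemma exists_rpow_le_zIntegrand (hμ : DifferentiableOn ℝ μ (Ioi 0)) (hpos : ∀ s > 0, 0 < μ s)
    {β c : ℝ} (hc : 0 < c) (hcβ : c < β)
    (hld : Tendsto (fun ρ => ρ * deriv μ ρ / μ ρ) atTop (𝓝 β)) :
    ∃ K > 0, ∀ᶠ s in atTop, K * s ^ (3 * c / 2 - 2) ≤ zIntegrand μ s := by
  obtain ⟨M, hM⟩ := eventually_atTop.1 ((eventually_mul_le_of_tendsto_div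
    ((eventually_gt_atTop 0).mono hpos) hld hcβ).and (eventually_gt_atTop 0))
  have hM0 : 0 < M := (hM M le_rfl).2
  have hmono := monotoneOn_div_rpow_of_mul_le_mul_deriv (convex_Ici M) (fun _ hs => hM0.trans_le hs)
    (fun s hs => (hμ.differentiableAt (Ioi_mem_nhds (hM0.trans_le hs))).hasDerivAt)
    fun s hs => (hM s hs).1
  have hk : 0 < μ M / M ^ c := div_pos (hpos M hM0) (Real.rpow_pos_of_pos hM0 c)
  refine ⟨c * (μ M / M ^ c * Real.sqrt (μ M / M ^ c)), by positivity,
    (eventually_ge_atTop M).mono fun s hs => ?_⟩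
  have hs0 : 0 < s := hM0.trans_le hs
  have hμs : μ M / M ^ c * s ^ c ≤ μ s :=
    (le_div_iff₀ (Real.rpow_pos_of_pos hs0 c)).1 (hmono self_mem_Ici hs hs)
  exact le_sqrt_mul_div_of_rpow_le hs0 hk.le hc.le hμs (hM s hs).1

lemma exists_eventually_rpow_le_integral_zIntegrand (hμ : DifferentiableOn ℝ μ (Ioi 0))
    (hpos : ∀ s > 0, 0 < μ s) (hderiv : ∀ s > 0, 0 ≤ deriv μ s)
    (hint : ∀ T > 0, IntervalIntegrable (zIntegrand μ) volume 0 T) {β c : ℝ} (hc : 2 / 3 < c)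
    (hcβ : c < β) (hld : Tendsto (fun ρ => ρ * deriv μ ρ / μ ρ) atTop (𝓝 β)) :
    ∃ C > 0, ∀ᶠ ρ in atTop, C * ρ ^ ((3 * c - 2) / 2) ≤ ∫ s in (0)..ρ, zIntegrand μ s := by
  obtain ⟨K, hK, hle⟩ := exists_rpow_le_zIntegrand hμ hpos (by linarith) hcβ hld
  have hexp : 3 * c / 2 - 2 + 1 = (3 * c - 2) / 2 := by ring
  refine ⟨K / (2 * ((3 * c - 2) / 2)), div_pos hK (by linarith), ?_⟩
  simpa only [hexp] using eventually_rpow_le_integral hK.le (by linarith) hint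
    (fun s hs => zIntegrand_nonneg hderiv hs) hle

end

theorem stmt11_general (μ : ℝ → ℝ)
    (hC1 : ContDiffOn ℝ 1 μ (Set.Ioi 0))
    (hpos : ∀ ρ > (0:ℝ), 0 < μ ρ) (hpos' : ∀ ρ > (0:ℝ), 0 < deriv μ ρ)
    (α β : ℝ) (hα1 : 2 / 3 < α) (hβ1 : 1 < β)
    (hvac : Tendsto (fun ρ => ρ * deriv μ ρ / μ ρ) (nhdsWithin 0 (Set.Ioi 0)) (nhds α))
    (hld : Tendsto (fun ρ => ρ * deriv μ ρ / μ ρ) atTop (nhds β)) :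
    (∀ T > (0:ℝ), IntegrableOn (fun s => Real.sqrt (μ s) * deriv μ s / s) (Set.Ioo 0 T)) ∧
    (∀ η, 0 < η → η < β - 2 / 3 → ∃ M > (0:ℝ), ∃ C > (0:ℝ), ∀ ρ ≥ M,
        (∫ s in (0:ℝ)..ρ, Real.sqrt (μ s) * deriv μ s / s) ≥
          C * ρ ^ ((3 * (β - η) - 2) / 2)) ∧
    Tendsto (fun ρ => ∫ s in (0:ℝ)..ρ, Real.sqrt (μ s) * deriv μ s / s) atTop atTop := by
  have hderiv : ∀ s > 0, 0 ≤ deriv μ s := fun s hs => (hpos' s hs).le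
  have hint : ∀ T > 0, IntervalIntegrable (zIntegrand μ) volume 0 T := fun T hT =>
    intervalIntegrable_zIntegrand hC1 hpos hderiv hα1 hvac hT
  have hgrowth : ∀ c, 2 / 3 < c → c < β →
      ∃ C > 0, ∀ᶠ ρ in atTop, C * ρ ^ ((3 * c - 2) / 2) ≤ ∫ s in (0)..ρ, zIntegrand μ s :=
    fun c hc hcβ => exists_eventually_rpow_le_integral_zIntegrand
      (hC1.differentiableOn one_ne_zero) hpos hderiv hint hc hcβ hld
  refine ⟨fun T hT => (intervalIntegrable_iff_integrableOn_Ioo_of_le hT.le).1 (hint T hT),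
    fun η hη hηβ => ?_, ?_⟩
  · obtain ⟨C, hC, hev⟩ := hgrowth (β - η) (by linarith) (by linarith)
    obtain ⟨M, hM⟩ := eventually_atTop.1 hev
    exact ⟨max M 1, by positivity, C, hC, fun ρ hρ => hM ρ (le_of_max_le_left hρ)⟩
  · obtain ⟨C, hC, hev⟩ := hgrowth ((β + 2 / 3) / 2) (by linarith) (by linarith)
    exact tendsto_atTop_mono' atTop hev ((tendsto_rpow_atTop (by linarith)).const_mul_atTop hC)

/-- Under the vacuum condition (exponent `α ∈ (2/3,4]`) and large-density
condition (exponent `β ∈ (1,4)`), (i) `s ↦ √(μ(s))μ'(s)/s` is integrable on `(0,T)` for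
every `T > 0` (so `Z(ρ) = ∫₀^ρ √(μ(s))μ'(s)/s ds` is well defined and finite), and
(ii) for every `0 < η < β − 2/3` there are `M, C > 0` with
`Z(ρ) ≥ C ρ^{(3(β−η)−2)/2}` for `ρ ≥ M`; in particular `Z(ρ) → ∞` as `ρ → ∞`. -/
theorem stmt11 (μ : ℝ → ℝ)
    (hcont : ContinuousOn μ (Set.Ici 0))
    (hC1 : ContDiffOn ℝ 1 μ (Set.Ioi 0))
    (hpos : ∀ ρ > (0:ℝ), 0 < μ ρ) (hpos' : ∀ ρ > (0:ℝ), 0 < deriv μ ρ)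
    (α β : ℝ) (hα1 : 2 / 3 < α) (hα2 : α ≤ 4) (hβ1 : 1 < β) (hβ2 : β < 4)
    (hvac : Tendsto (fun ρ => ρ * deriv μ ρ / μ ρ) (nhdsWithin 0 (Set.Ioi 0)) (nhds α))
    (hld : Tendsto (fun ρ => ρ * deriv μ ρ / μ ρ) atTop (nhds β)) :
    (∀ T > (0:ℝ), IntegrableOn (fun s => Real.sqrt (μ s) * deriv μ s / s) (Set.Ioo 0 T)) ∧
    (∀ η, 0 < η → η < β - 2 / 3 → ∃ M > (0:ℝ), ∃ C > (0:ℝ), ∀ ρ ≥ M,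
        (∫ s in (0:ℝ)..ρ, Real.sqrt (μ s) * deriv μ s / s) ≥
          C * ρ ^ ((3 * (β - η) - 2) / 2)) ∧
    Tendsto (fun ρ => ∫ s in (0:ℝ)..ρ, Real.sqrt (μ s) * deriv μ s / s) atTop atTop :=
  stmt11_general μ hC1 hpos hpos' α β hα1 hβ1 hvac hld
end

section
/- Let (X, m) be a measure space with m(X) = 1, and let g : X → ℝ be measurable with g ≥ 1 almost everywhere and g³ integrable. Set M₁ = ∫_X g dm. Then ln( ∫_X g³ dm ) ≥ (2/M₁) ∫_X g ln g dm. -/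
/-!
Tangent-line form of Jensen's inequality for `log`: with `A = ∫ g³ / ∫ g`, the inequality
`log t ≤ t - 1` at `t = g² / A`, multiplied by `g`, gives `2 g log g ≤ g log A + g³ / A - g`.
Integrating, the last two terms cancel and `2 ∫ g log g ≤ M₁ log (∫ g³ / M₁) ≤ M₁ log ∫ g³`,
because `M₁ ≥ 1`.
-/

open MeasureTheory Real

lemma two_mul_mul_log_le {a A : ℝ} (ha : 0 < a) (hA : 0 < A) :
    2 * (a * log a) ≤ a * log A + a ^ 3 / A - a := by
  have key : log (a ^ 2 / A) ≤ a ^ 2 / A - 1 := log_le_sub_one_of_pos (by positivity)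
  rw [log_div (by positivity) hA.ne', log_pow] at key
  push_cast at key
  calc 2 * (a * log a) ≤ a * (a ^ 2 / A - 1) + a * log A := by
        nlinarith [mul_le_mul_of_nonneg_left key ha.le]
    _ = a * log A + a ^ 3 / A - a := by field_simp; ring

lemma self_le_pow_three {a : ℝ} (ha : 1 ≤ a) : a ≤ a ^ 3 := by
  nlinarith [one_le_pow₀ (n := 2) ha]

section OneLe

variable {X : Type*} [MeasurableSpace X] {μ : Measure X} {g : X → ℝ}

lemma integrable_of_one_le_of_integrable_pow_three (hmeas : AEStronglyMeasurable g μ)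
    (hge : ∀ᵐ x ∂μ, 1 ≤ g x) (hint : Integrable (fun x => g x ^ 3) μ) : Integrable g μ := by
  refine hint.mono hmeas ?_
  filter_upwards [hge] with x hx
  rw [norm_of_nonneg (by linarith), norm_of_nonneg (by positivity)]
  exact self_le_pow_three hx

lemma integrable_mul_log_of_one_le_of_integrable_pow_three (hmeas : AEMeasurable g μ)
    (hge : ∀ᵐ x ∂μ, 1 ≤ g x) (hint : Integrable (fun x => g x ^ 3) μ) :
    Integrable (fun x => g x * log (g x)) μ := by
  refine hint.mono (hmeas.mul hmeas.log).aestronglyMeasurable ?_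
  filter_upwards [hge] with x hx
  have hlog : log (g x) ≤ g x - 1 := log_le_sub_one_of_pos (by linarith)
  have hpow : g x ^ 2 ≤ g x ^ 3 := pow_le_pow_right₀ hx (by norm_num)
  rw [norm_of_nonneg (mul_nonneg (by linarith) (log_nonneg hx)), norm_of_nonneg (by positivity)]
  nlinarith [log_nonneg hx]

end OneLe

lemma two_mul_integral_mul_log_le {X : Type*} [MeasurableSpace X] {μ : Measure X} {g : X → ℝ}
    (hpos : ∀ᵐ x ∂μ, 0 < g x) (hg : Integrable g μ) (hg3 : Integrable (fun x => g x ^ 3) μ)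
    (hgl : Integrable (fun x => g x * log (g x)) μ) (hM : 0 < ∫ x, g x ∂μ)
    (hI : 0 < ∫ x, g x ^ 3 ∂μ) :
    2 * ∫ x, g x * log (g x) ∂μ ≤
      (∫ x, g x ∂μ) * log ((∫ x, g x ^ 3 ∂μ) / ∫ x, g x ∂μ) := by
  set M := ∫ x, g x ∂μ
  set A := (∫ x, g x ^ 3 ∂μ) / M
  have hA : 0 < A := div_pos hI hM
  have hpt : ∀ᵐ x ∂μ, 2 * (g x * log (g x)) ≤ g x * log A + g x ^ 3 / A - g x := by
    filter_upwards [hpos] with x hx using two_mul_mul_log_le hx hA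
  have hgA : Integrable (fun x => g x * log A) μ := hg.mul_const _
  have hg3A : Integrable (fun x => g x ^ 3 / A) μ := hg3.div_const _
  have hsum : Integrable (fun x => g x * log A + g x ^ 3 / A) μ := hgA.add hg3A
  have hmono := integral_mono_ae (hgl.const_mul 2)
    (g := fun x => g x * log A + g x ^ 3 / A - g x) (hsum.sub hg) hpt
  rw [integral_const_mul, integral_sub hsum hg, integral_add hgA hg3A,
    integral_mul_const, integral_div] at hmono
  have hcancel : (∫ x, g x ^ 3 ∂μ) / A = M := by simp only [A]; field_simp
  linarith

/-- On a probability space, for measurable `g ≥ 1` a.e. with `g³` integrable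
and `M₁ = ∫ g`, one has `ln(∫ g³) ≥ (2/M₁) ∫ g ln g` (the Jensen step of the generalized
log-Sobolev argument). -/
theorem stmt14 {X : Type*} [MeasurableSpace X] (m : Measure X) [IsProbabilityMeasure m]
    (g : X → ℝ) (hmeas : Measurable g) (hge : ∀ᵐ x ∂m, 1 ≤ g x)
    (hint : Integrable (fun x => (g x) ^ 3) m) :
    Real.log (∫ x, (g x) ^ 3 ∂m) ≥ (2 / ∫ x, g x ∂m) * ∫ x, g x * Real.log (g x) ∂m := by
  have hg := integrable_of_one_le_of_integrable_pow_three hmeas.aestronglyMeasurable hge hint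
  have hM : 1 ≤ ∫ x, g x ∂m := by
    simpa using integral_mono_ae (integrable_const 1) hg hge
  have hI : 1 ≤ ∫ x, g x ^ 3 ∂m :=
    hM.trans (integral_mono_ae hg hint (hge.mono fun x hx => self_le_pow_three hx))
  have hjensen := two_mul_integral_mul_log_le (hge.mono fun x hx => by linarith) hg hint
    (integrable_mul_log_of_one_le_of_integrable_pow_three hmeas.aemeasurable hge hint)
    (by linarith) (by linarith)
  rw [log_div (by positivity) (by positivity)] at hjensen
  have hlogM : 0 ≤ log (∫ x, g x ∂m) := log_nonneg hM
  rw [ge_iff_le, div_mul_eq_mul_div, div_le_iff₀ (by linarith)]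
  nlinarith
end

section
/- Let α₂ > 0 and let μ : (0,∞) → ℝ be differentiable with μ'(s) ≥ 0 and s μ'(s) ≤ α₂ μ(s) for all s > 0. Then for every ρ ≥ 1: ρ ∫₁^ρ μ(s)/s² ds ≥ ( μ(ρ) − μ(1) ) / α₂. -/
open Set intervalIntegral

lemma integral_div_le_mul_integral_div_sq {f : ℝ → ℝ} {a b : ℝ} (ha : 0 < a) (hab : a ≤ b)
    (hf : ContinuousOn f (Icc a b)) (hf_nonneg : ∀ s ∈ Icc a b, 0 ≤ f s) :
    ∫ s in a..b, f s / s ≤ b * ∫ s in a..b, f s / s ^ 2 := by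
  have hpos : ∀ s ∈ Icc a b, 0 < s := fun s hs => ha.trans_le hs.1
  rw [← integral_const_mul]
  refine integral_mono_on hab ?_ ?_ fun s hs => ?_
  · exact (hf.div continuousOn_id fun s hs => (hpos s hs).ne').intervalIntegrable_of_Icc hab
  · exact (continuousOn_const.mul (hf.div (continuousOn_pow 2) fun s hs => by
      have := hpos s hs; positivity)).intervalIntegrable_of_Icc hab
  · have hs0 := hpos s hs
    calc f s / s = s * (f s / s ^ 2) := by field_simp
      _ ≤ b * (f s / s ^ 2) := by
        gcongr
        · exact div_nonneg (hf_nonneg s hs) (by positivity)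
        · exact hs.2

lemma sub_le_mul_integral_div_of_mul_deriv_le {f : ℝ → ℝ} {α a b : ℝ} (ha : 0 < a) (hab : a ≤ b)
    (hf : ∀ s ∈ Icc a b, DifferentiableAt ℝ f s)
    (hderiv : ∀ s ∈ Ioo a b, s * deriv f s ≤ α * f s) :
    f b - f a ≤ α * ∫ s in a..b, f s / s := by
  have hpos : ∀ s ∈ Icc a b, 0 < s := fun s hs => ha.trans_le hs.1
  have hcont : ContinuousOn f (Icc a b) := fun s hs => (hf s hs).continuousAt.continuousWithinAt
  rw [← integral_const_mul]
  refine sub_le_integral_of_hasDeriv_right_of_le hab hcont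
    (fun s hs => (hf s (Ioo_subset_Icc_self hs)).hasDerivAt.hasDerivWithinAt) ?_ fun s hs => ?_
  · exact (continuousOn_const.mul (hcont.div continuousOn_id fun s hs => (hpos s hs).ne'))
      |>.integrableOn_compact isCompact_Icc
  · have hs0 := hpos s (Ioo_subset_Icc_self hs)
    rw [← mul_div_assoc, le_div_iff₀ hs0, mul_comm]
    exact hderiv s hs

/-- If `μ' ≥ 0` and `s μ'(s) ≤ α₂ μ(s)` for all `s > 0` (with `α₂ > 0`),
then for every `ρ ≥ 1`, `ρ ∫₁^ρ μ(s)/s² ds ≥ (μ(ρ) − μ(1))/α₂`. -/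
theorem stmt16 (α₂ : ℝ) (hα₂ : 0 < α₂) (μ : ℝ → ℝ)
    (hdiff : ∀ s > (0:ℝ), DifferentiableAt ℝ μ s)
    (hderiv_nn : ∀ s > (0:ℝ), 0 ≤ deriv μ s)
    (hstruct : ∀ s > (0:ℝ), s * deriv μ s ≤ α₂ * μ s) :
    ∀ ρ ≥ (1:ℝ), ρ * ∫ s in (1:ℝ)..ρ, μ s / s ^ 2 ≥ (μ ρ - μ 1) / α₂ := by
  intro ρ hρ
  have hpos : ∀ s ∈ Icc 1 ρ, 0 < s := fun s hs => one_pos.trans_le hs.1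
  have hμ_nonneg : ∀ s > (0:ℝ), 0 ≤ μ s := fun s hs =>
    nonneg_of_mul_nonneg_right ((mul_nonneg hs.le (hderiv_nn s hs)).trans (hstruct s hs)) hα₂
  have hgrowth : μ ρ - μ 1 ≤ α₂ * ∫ s in (1:ℝ)..ρ, μ s / s :=
    sub_le_mul_integral_div_of_mul_deriv_le one_pos hρ (fun s hs => hdiff s (hpos s hs))
      fun s hs => hstruct s (hpos s (Ioo_subset_Icc_self hs))
  have hweight : ∫ s in (1:ℝ)..ρ, μ s / s ≤ ρ * ∫ s in (1:ℝ)..ρ, μ s / s ^ 2 :=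
    integral_div_le_mul_integral_div_sq one_pos hρ
      (fun s hs => (hdiff s (hpos s hs)).continuousAt.continuousWithinAt)
      fun s hs => hμ_nonneg s (hpos s hs)
  rw [ge_iff_le, div_le_iff₀' hα₂]
  exact hgrowth.trans (mul_le_mul_of_nonneg_left hweight hα₂.le)
end

section
/- Let μ : (0,∞) → ℝ be continuously differentiable with μ(ρ) > 0 and μ'(ρ) > 0 for every ρ > 0, and suppose that ρ μ'(ρ)/μ(ρ) → β as ρ → ∞, where β > 1. Then for every r₀ > 0 there exists c > 0 such that μ'(ρ) ≥ c for all ρ ≥ r₀. -/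
/-!
Since `ρ μ'(ρ) / μ(ρ) → β > 1`, eventually `μ ≤ ρ μ'`, i.e. `(μ(ρ)/ρ)' ≥ 0` on some `[R, ∞)`.
There `μ'(ρ) ≥ μ(ρ)/ρ ≥ μ(R)/R > 0`; on the compact interval `[r₀, R]` the continuous positive
function `μ'` is bounded below by its minimum.
-/

open Filter Set

theorem monotoneOn_div_self_of_le_mul_deriv {f : ℝ → ℝ} {R : ℝ} (hR : 0 < R)
    (hf : DifferentiableOn ℝ f (Ici R)) (h : ∀ x > R, f x ≤ x * deriv f x) :
    MonotoneOn (fun x => f x / x) (Ici R) := by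
  have hderiv : ∀ x > R,
      HasDerivAt (fun x => f x / x) ((deriv f x * x - f x * 1) / x ^ 2) x := fun x hx =>
    ((hf.differentiableAt (Ici_mem_nhds hx)).hasDerivAt.div (hasDerivAt_id x)
      (hR.trans hx).ne')
  apply monotoneOn_of_deriv_nonneg (convex_Ici R)
  · exact hf.continuousOn.div continuousOn_id fun x hx => (hR.trans_le hx).ne'
  · rw [interior_Ici]
    exact fun x hx => (hderiv x hx).differentiableAt.differentiableWithinAt
  · rw [interior_Ici]
    intro x hx
    rw [(hderiv x hx).deriv]
    have := h x hx
    exact div_nonneg (by linarith [mul_comm x (deriv f x)]) (sq_nonneg x)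

theorem div_le_deriv_of_le_mul_deriv {f : ℝ → ℝ} {R : ℝ} (hR : 0 < R)
    (hf : DifferentiableOn ℝ f (Ici R)) (h : ∀ x ≥ R, f x ≤ x * deriv f x) :
    ∀ x ≥ R, f R / R ≤ deriv f x := fun x hx =>
  calc f R / R ≤ f x / x :=
        monotoneOn_div_self_of_le_mul_deriv hR hf (fun y hy => h y hy.le) self_mem_Ici hx hx
    _ ≤ deriv f x := by
        rw [div_le_iff₀ (hR.trans_le hx), mul_comm]
        exact h x hx

theorem exists_pos_le_on_Ici_of_tail {f : ℝ → ℝ} {a b c : ℝ} (hc : 0 < c)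
    (htail : ∀ x ≥ b, c ≤ f x) (hf : ContinuousOn f (Icc a b)) (hpos : ∀ x ∈ Icc a b, 0 < f x) :
    ∃ c > 0, ∀ x ≥ a, c ≤ f x := by
  obtain ⟨c', hc', hmin⟩ := isCompact_Icc.exists_forall_le' hf hpos
  refine ⟨min c c', lt_min hc hc', fun x hx => ?_⟩
  rcases le_total x b with hxb | hbx
  · exact (min_le_right _ _).trans (hmin x ⟨hx, hxb⟩)
  · exact (min_le_left _ _).trans (htail x hbx)

/-- If `μ` is `C¹` on `(0,∞)`, positive with positive derivative there, and
`ρ μ'(ρ)/μ(ρ) → β > 1` as `ρ → ∞`, then for every `r₀ > 0` the derivative `μ'` is bounded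
below by a positive constant on `[r₀, ∞)`. -/
theorem stmt19 (μ : ℝ → ℝ) (hμ : ContDiffOn ℝ 1 μ (Set.Ioi 0))
    (hpos : ∀ ρ > (0:ℝ), 0 < μ ρ) (hpos' : ∀ ρ > (0:ℝ), 0 < deriv μ ρ)
    (β : ℝ) (hβ : 1 < β)
    (hlim : Tendsto (fun ρ => ρ * deriv μ ρ / μ ρ) atTop (nhds β)) :
    ∀ r₀ > (0:ℝ), ∃ c > (0:ℝ), ∀ ρ ≥ r₀, c ≤ deriv μ ρ := by
  intro r₀ hr₀
  obtain ⟨R, hR⟩ := eventually_atTop.1 (hlim.eventually (eventually_ge_nhds hβ))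
  set R₀ := max R r₀
  have hR₀ : 0 < R₀ := hr₀.trans_le (le_max_right _ _)
  have hmul : ∀ ρ ≥ R₀, μ ρ ≤ ρ * deriv μ ρ := fun ρ hρ => by
    have := hR ρ (le_of_max_le_left hρ)
    rwa [one_le_div (hpos ρ (hR₀.trans_le hρ))] at this
  have hdiff : DifferentiableOn ℝ μ (Ici R₀) :=
    (hμ.differentiableOn one_ne_zero).mono fun x hx => hR₀.trans_le hx
  have hIcc : Icc r₀ R₀ ⊆ Ioi 0 := fun x hx => hr₀.trans_le hx.1
  exact exists_pos_le_on_Ici_of_tail (div_pos (hpos R₀ hR₀) hR₀)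
    (div_le_deriv_of_le_mul_deriv hR₀ hdiff hmul)
    ((hμ.continuousOn_deriv_of_isOpen isOpen_Ioi le_rfl).mono hIcc)
    (fun x hx => hpos' x (hIcc hx))
end
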